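/- Let Ω̃ = {(x,y) ∈ ℝ² : |x| ≤ 1, −1 ≤ y ≤ 0, x² + y² ≥ 1/4} ∪ {(x,y) ∈ ℝ² : y ≥ 0, 1/4 ≤ x² + y² ≤ 1}. Define Q̃ : Ω̃ → M₃(ℝ) by Q̃(x,y) = P((0,1,0)) if y ≤ 0, and Q̃(x,y) = P((−y/√(x²+y²), x/√(x²+y²), 0)) if y ≥ 0. Then Q̃ is well defined (the two formulas agree where both apply) and continuous on Ω̃, and Q̃ is not orientable: there is no continuous map n : Ω̃ → 𝕊² with Q̃(x,y) = P(n(x,y)) for all (x,y) ∈ Ω̃. -/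

import Mathlib

/-!
On the upper half-annulus `Q̃` is spanned by the tangent `(-y, x, 0)`, on the lower part by
`e₂ = (0, 1, 0)`. If `Q̃ = P(n)` with `n` continuous, then on any connected set where `Q̃` is
spanned by a continuous unit field `τ`, the function `n ⬝ τ` is continuous with values `±1`,
hence constant. Along the unit half-circle from `(1, 0)` to `(-1, 0)` the tangent turns from
`e₂` into `-e₂`, while along the lower rectangle between the same two points `e₂` is unchanged.
So `n(-1, 0) ⬝ e₂ = -n(-1, 0) ⬝ e₂ = 0`, contradicting `(n ⬝ e₂)² = 1`.
-/

/-- `P(n) = s (n⊗n − (1/3) Id)`. -/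
noncomputable def Pmat (s : ℝ) (n : Fin 3 → ℝ) : Matrix (Fin 3) (Fin 3) ℝ :=
  s • (Matrix.vecMulVec n n - (1 / 3 : ℝ) • (1 : Matrix (Fin 3) (Fin 3) ℝ))

/-- The domain `Ω̃`: the lower rectangle `[−1,1] × [−1,0]` minus the open disc of radius
`1/2` about the origin, together with the closed upper half-annulus of radii `1/2` and `1`. -/
def OmegaTilde : Set (ℝ × ℝ) :=
  {p : ℝ × ℝ | |p.1| ≤ 1 ∧ -1 ≤ p.2 ∧ p.2 ≤ 0 ∧ 1 / 4 ≤ p.1 ^ 2 + p.2 ^ 2} ∪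
  {p : ℝ × ℝ | 0 ≤ p.2 ∧ 1 / 4 ≤ p.1 ^ 2 + p.2 ^ 2 ∧ p.1 ^ 2 + p.2 ^ 2 ≤ 1}

/-- The line field `Q̃` of Figure 1: constant vertical lines for `y ≤ 0`, tangential
lines for `y ≥ 0`. -/
noncomputable def Qtilde (s : ℝ) (p : ℝ × ℝ) : Matrix (Fin 3) (Fin 3) ℝ :=
  if p.2 ≤ 0 then Pmat s ![0, 1, 0]
  else Pmat s ![-p.2 / Real.sqrt (p.1 ^ 2 + p.2 ^ 2), p.1 / Real.sqrt (p.1 ^ 2 + p.2 ^ 2), 0]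

open Matrix Set

lemma Pmat_neg (s : ℝ) (n : Fin 3 → ℝ) : Pmat s (-n) = Pmat s n := by
  simp only [Pmat, neg_vecMulVec, vecMulVec_neg, neg_neg]

lemma vecMulVec_self_eq_of_Pmat_eq {s : ℝ} (hs : s ≠ 0) {a b : Fin 3 → ℝ}
    (h : Pmat s a = Pmat s b) : vecMulVec a a = vecMulVec b b :=
  sub_left_injective (smul_right_injective _ hs h)

lemma continuous_Pmat (s : ℝ) : Continuous (Pmat s) := by
  unfold Pmat
  fun_prop

lemma dotProduct_sq_eq_of_vecMulVec_self_eq {ι : Type*} [Fintype ι] {a b : ι → ℝ}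
    (h : vecMulVec a a = vecMulVec b b) : (a ⬝ᵥ b) ^ 2 = (b ⬝ᵥ b) ^ 2 := by
  have hab : ∀ i j, a i * a j = b i * b j := fun i j => by
    simpa only [vecMulVec_apply] using congrFun (congrFun h i) j
  simp only [sq, dotProduct, Finset.sum_mul_sum]
  refine Finset.sum_congr rfl fun i _ => Finset.sum_congr rfl fun j _ => ?_
  calc a i * b i * (a j * b j) = (a i * a j) * (b i * b j) := by ring
    _ = b i * b i * (b j * b j) := by rw [hab]; ring

lemma IsPreconnected.dotProduct_eq_of_vecMulVec_self_eq {X ι : Type*} [TopologicalSpace X]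
    [Fintype ι] {S : Set X} (hS : IsPreconnected S) {n τ : X → ι → ℝ}
    (hn : ContinuousOn n S) (hτ : ContinuousOn τ S) (hτ_unit : ∀ p ∈ S, τ p ⬝ᵥ τ p = 1)
    (hnτ : ∀ p ∈ S, vecMulVec (n p) (n p) = vecMulVec (τ p) (τ p)) {x y : X}
    (hx : x ∈ S) (hy : y ∈ S) : n x ⬝ᵥ τ x = n y ⬝ᵥ τ y := by
  have hcont : ContinuousOn (fun p => n p ⬝ᵥ τ p) S := by
    simp only [dotProduct]
    fun_prop
  have hsq : EqOn ((fun p => n p ⬝ᵥ τ p) ^ 2) 1 S := fun p hp => by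
    simp [dotProduct_sq_eq_of_vecMulVec_self_eq (hnτ p hp), hτ_unit p hp]
  rcases hS.eq_one_or_eq_neg_one_of_sq_eq hcont hsq with h | h
  · exact (h hx).trans (h hy).symm
  · exact (h hx).trans (h hy).symm

noncomputable def tangentField (p : ℝ × ℝ) : Fin 3 → ℝ :=
  ![-p.2 / Real.sqrt (p.1 ^ 2 + p.2 ^ 2), p.1 / Real.sqrt (p.1 ^ 2 + p.2 ^ 2), 0]

lemma tangentField_of_sq_add_sq_eq_one {p : ℝ × ℝ} (hp : p.1 ^ 2 + p.2 ^ 2 = 1) :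
    tangentField p = ![-p.2, p.1, 0] := by
  simp [tangentField, hp]

lemma continuousOn_tangentField :
    ContinuousOn tangentField {p : ℝ × ℝ | 0 < p.1 ^ 2 + p.2 ^ 2} := by
  have hsqrt : ∀ p ∈ {p : ℝ × ℝ | 0 < p.1 ^ 2 + p.2 ^ 2}, Real.sqrt (p.1 ^ 2 + p.2 ^ 2) ≠ 0 :=
    fun p hp => (Real.sqrt_pos.2 hp).ne'
  refine continuousOn_pi.2 fun i => ?_
  fin_cases i
  · exact ContinuousOn.div (by fun_prop) (by fun_prop) hsqrt
  · exact ContinuousOn.div (by fun_prop) (by fun_prop) hsqrt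
  · exact continuousOn_const

lemma Pmat_vertical_eq_tangentField (s : ℝ) {p : ℝ × ℝ} (h1 : p.1 ≠ 0) (h2 : p.2 = 0) :
    Pmat s ![0, 1, 0] = Pmat s (tangentField p) := by
  obtain ⟨x, y⟩ := p
  subst h2
  have htangent : tangentField (x, 0) = ![0, x / |x|, 0] := by
    simp [tangentField, Real.sqrt_sq_eq_abs]
  rcases h1.lt_or_gt with hx | hx
  · rw [htangent, abs_of_neg hx, div_neg, div_self hx.ne, ← Pmat_neg]
    congr 1
    ext i
    fin_cases i <;> simp
  · rw [htangent, abs_of_pos hx, div_self hx.ne']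

lemma quarter_le_of_mem_omegaTilde {p : ℝ × ℝ} (hp : p ∈ OmegaTilde) :
    1 / 4 ≤ p.1 ^ 2 + p.2 ^ 2 := by
  rcases hp with h | h
  · exact h.2.2.2
  · exact h.2.1

lemma fst_ne_zero_of_mem_omegaTilde {p : ℝ × ℝ} (hp : p ∈ OmegaTilde) (h2 : p.2 = 0) :
    p.1 ≠ 0 := by
  have := quarter_le_of_mem_omegaTilde hp
  rintro h1
  rw [h1, h2] at this
  norm_num at this

lemma Qtilde_eq_tangentField (s : ℝ) {p : ℝ × ℝ} (hp : p ∈ OmegaTilde) (h2 : 0 ≤ p.2) :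
    Qtilde s p = Pmat s (tangentField p) := by
  rcases h2.eq_or_lt with h | h
  · rw [Qtilde, if_pos h.ge]
    exact Pmat_vertical_eq_tangentField s (fst_ne_zero_of_mem_omegaTilde hp h.symm) h.symm
  · rw [Qtilde, if_neg h.not_ge, tangentField]

lemma continuousOn_Qtilde (s : ℝ) : ContinuousOn (Qtilde s) OmegaTilde := by
  refine ContinuousOn.if (fun p ⟨hp, hfr⟩ => ?_) continuousOn_const ?_
  · have h2 : p.2 = 0 := frontier_le_subset_eq continuous_snd continuous_const hfr
    exact Pmat_vertical_eq_tangentField s (fst_ne_zero_of_mem_omegaTilde hp h2) h2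
  · refine (continuous_Pmat s).comp_continuousOn (continuousOn_tangentField.mono ?_)
    exact fun p hp => lt_of_lt_of_le (by norm_num) (quarter_le_of_mem_omegaTilde hp.1)

section NonOrientable

variable {s : ℝ} {n : ℝ × ℝ → Fin 3 → ℝ}

lemma dotProduct_vertical_eq_of_isPreconnected (hs : s ≠ 0) (hn : ContinuousOn n OmegaTilde)
    (hQ : ∀ p ∈ OmegaTilde, Qtilde s p = Pmat s (n p)) {B : Set (ℝ × ℝ)} (hB : IsPreconnected B)
    (hBΩ : B ⊆ OmegaTilde) (hB2 : ∀ p ∈ B, p.2 ≤ 0) {x y : ℝ × ℝ} (hx : x ∈ B) (hy : y ∈ B) :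
    n x ⬝ᵥ ![0, 1, 0] = n y ⬝ᵥ ![0, 1, 0] := by
  refine hB.dotProduct_eq_of_vecMulVec_self_eq (τ := fun _ => ![0, 1, 0]) (hn.mono hBΩ)
    continuousOn_const (fun _ _ => by simp [dotProduct, Fin.sum_univ_three]) (fun p hp => ?_)
    hx hy
  refine vecMulVec_self_eq_of_Pmat_eq hs ?_
  rw [← hQ p (hBΩ hp), Qtilde, if_pos (hB2 p hp)]

lemma dotProduct_vertical_left_eq_right (hs : s ≠ 0) (hn : ContinuousOn n OmegaTilde)
    (hQ : ∀ p ∈ OmegaTilde, Qtilde s p = Pmat s (n p)) :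
    n (1, 0) ⬝ᵥ ![0, 1, 0] = n (-1, 0) ⬝ᵥ ![0, 1, 0] := by
  have box : ∀ a b : ℝ × ℝ, (-1 ≤ a.1 ∧ -1 ≤ a.2 ∧ b.1 ≤ 1 ∧ b.2 ≤ 0 ∧
      (1 / 2 ≤ a.1 ∨ b.2 ≤ -1 / 2 ∨ b.1 ≤ -1 / 2)) →
      ∀ x ∈ Icc a b, ∀ y ∈ Icc a b, n x ⬝ᵥ ![0, 1, 0] = n y ⬝ᵥ ![0, 1, 0] := by
    rintro a b ⟨ha1, ha2, hb1, hb2, hab⟩ x hx y hy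
    refine dotProduct_vertical_eq_of_isPreconnected hs hn hQ (convex_Icc a b).isPreconnected
      ?_ (fun p hp => hp.2.2.trans hb2) hx hy
    rintro p ⟨⟨hp1, hp2⟩, ⟨hp3, hp4⟩⟩
    refine Or.inl ⟨abs_le.2 ⟨by linarith, by linarith⟩, by linarith, by linarith, ?_⟩
    rcases hab with h | h | h <;> nlinarith
  calc n (1, 0) ⬝ᵥ ![0, 1, 0]
      = n (1, -1) ⬝ᵥ ![0, 1, 0] :=
        box (1 / 2, -1) (1, 0) (by norm_num) _ (by norm_num) _ (by norm_num)
    _ = n (-1, -1) ⬝ᵥ ![0, 1, 0] :=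
        box (-1, -1) (1, -1 / 2) (by norm_num) _ (by norm_num) _ (by norm_num)
    _ = n (-1, 0) ⬝ᵥ ![0, 1, 0] :=
        box (-1, -1) (-1 / 2, 0) (by norm_num) _ (by norm_num) _ (by norm_num)

lemma dotProduct_vertical_left_eq_neg_right (hs : s ≠ 0) (hn : ContinuousOn n OmegaTilde)
    (hQ : ∀ p ∈ OmegaTilde, Qtilde s p = Pmat s (n p)) :
    n (1, 0) ⬝ᵥ ![0, 1, 0] = -(n (-1, 0) ⬝ᵥ ![0, 1, 0]) := by
  set arc := (fun θ => (Real.cos θ, Real.sin θ)) '' Icc 0 Real.pi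
  have harc_mem : ∀ p ∈ arc, p.1 ^ 2 + p.2 ^ 2 = 1 ∧ 0 ≤ p.2 := by
    rintro _ ⟨θ, hθ, rfl⟩
    exact ⟨Real.cos_sq_add_sin_sq θ, Real.sin_nonneg_of_nonneg_of_le_pi hθ.1 hθ.2⟩
  have harcΩ : arc ⊆ OmegaTilde := fun p hp => by
    obtain ⟨hp1, hp2⟩ := harc_mem p hp
    exact Or.inr ⟨hp2, by linarith, hp1.le⟩
  have harc : IsPreconnected arc := isPreconnected_Icc.image _ (by fun_prop)
  have h1 : ((1 : ℝ), (0 : ℝ)) ∈ arc := ⟨0, ⟨le_rfl, Real.pi_pos.le⟩, by simp⟩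
  have h2 : ((-1 : ℝ), (0 : ℝ)) ∈ arc := ⟨Real.pi, ⟨Real.pi_pos.le, le_rfl⟩, by simp⟩
  have key := harc.dotProduct_eq_of_vecMulVec_self_eq (τ := fun p => ![-p.2, p.1, 0])
    (hn.mono harcΩ) (by fun_prop) (fun p hp => ?_) (fun p hp => ?_) h1 h2
  · simpa [dotProduct, Fin.sum_univ_three] using key
  · simp only [dotProduct, Fin.sum_univ_three, cons_val, mul_zero, add_zero]
    linarith [(harc_mem p hp).1]
  · refine vecMulVec_self_eq_of_Pmat_eq hs ?_
    rw [← hQ p (harcΩ hp), Qtilde_eq_tangentField s (harcΩ hp) (harc_mem p hp).2,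
      tangentField_of_sq_add_sq_eq_one (harc_mem p hp).1]

lemma dotProduct_vertical_ne_zero (hs : s ≠ 0)
    (hQ : ∀ p ∈ OmegaTilde, Qtilde s p = Pmat s (n p)) {p : ℝ × ℝ} (hp : p ∈ OmegaTilde)
    (h2 : p.2 ≤ 0) : n p ⬝ᵥ ![0, 1, 0] ≠ 0 := by
  have hvertical : vecMulVec (n p) (n p) = vecMulVec ![0, 1, 0] ![0, 1, 0] := by
    refine vecMulVec_self_eq_of_Pmat_eq hs ?_
    rw [← hQ p hp, Qtilde, if_pos h2]
  intro h
  have hsq := dotProduct_sq_eq_of_vecMulVec_self_eq hvertical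
  rw [h] at hsq
  simp [dotProduct, Fin.sum_univ_three] at hsq

end NonOrientable

theorem stmt13_general (s : ℝ) (hs : s ≠ 0) :
    (∀ p ∈ OmegaTilde, p.2 = 0 →
      Pmat s ![0, 1, 0] =
        Pmat s ![-p.2 / Real.sqrt (p.1 ^ 2 + p.2 ^ 2),
                  p.1 / Real.sqrt (p.1 ^ 2 + p.2 ^ 2), 0]) ∧
    ContinuousOn (Qtilde s) OmegaTilde ∧
    ¬ ∃ n : ℝ × ℝ → EuclideanSpace ℝ (Fin 3),
        ContinuousOn n OmegaTilde ∧
        ∀ p ∈ OmegaTilde, ‖n p‖ = 1 ∧ Qtilde s p = Pmat s (fun i => n p i) := by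
  refine ⟨fun p hp h2 =>
    Pmat_vertical_eq_tangentField s (fst_ne_zero_of_mem_omegaTilde hp h2) h2,
    continuousOn_Qtilde s, ?_⟩
  rintro ⟨n, hn, hQ⟩
  have hN : ContinuousOn (fun p => WithLp.ofLp (n p)) OmegaTilde :=
    (PiLp.continuous_ofLp 2 _).comp_continuousOn hn
  have hQN : ∀ p ∈ OmegaTilde, Qtilde s p = Pmat s (WithLp.ofLp (n p)) := fun p hp => (hQ p hp).2
  have hleft := dotProduct_vertical_left_eq_right hs hN hQN
  have hflip := dotProduct_vertical_left_eq_neg_right hs hN hQN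
  exact dotProduct_vertical_ne_zero hs hQN (p := (-1, 0)) (Or.inl (by norm_num)) le_rfl
    (by linarith)

/-- `Q̃` is well defined (the two defining formulas agree where both apply),
continuous on `Ω̃`, and not orientable: no continuous unit vector field `n` on `Ω̃`
satisfies `Q̃ = P(n)` there. -/
theorem stmt13 (s : ℝ) (hs : s ≠ 0) (hs' : s ∈ Set.Icc (-(1 / 2) : ℝ) 1) :
    (∀ p ∈ OmegaTilde, p.2 = 0 →
      Pmat s ![0, 1, 0] =
        Pmat s ![-p.2 / Real.sqrt (p.1 ^ 2 + p.2 ^ 2),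
                  p.1 / Real.sqrt (p.1 ^ 2 + p.2 ^ 2), 0]) ∧
    ContinuousOn (Qtilde s) OmegaTilde ∧
    ¬ ∃ n : ℝ × ℝ → EuclideanSpace ℝ (Fin 3),
        ContinuousOn n OmegaTilde ∧
        ∀ p ∈ OmegaTilde, ‖n p‖ = 1 ∧ Qtilde s p = Pmat s (fun i => n p i) :=
  stmt13_general s hs
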